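/- arXiv:1803.08198 — 4 statements merged into one kernel-verified Lean document; each statement's English description precedes it below -/
import Mathlib

section
/- Under the SUCAG setup, for every k ≥ 1 the gradient-approximation error satisfies ‖e^k‖ ≤ (1/(2N)) ∑_{i≠i_k} L_{H,i} ‖θ^k − θ^{τ_i^{k−1}}‖² + (1/2)(1 − 1/N) L_{H,i_k} ‖θ^k − θ^{τ_{i_k}^{k−1}}‖². -/
/-!
Write `D i := ∇f_i(θ^k) - g_i^k(θ^k)` for the error of the first-order Taylor model of `∇f_i`
around `θ^{τ_i^{k-1}}`. Since `∇F` is the average of the `∇f_i`, the error is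
`e^k = D_{i_k} - (1/N) ∑_i D_i = (1 - 1/N) D_{i_k} - (1/N) ∑_{i ≠ i_k} D_i`, and the Lipschitz
continuity of the Hessian bounds each `‖D i‖` by `L_{H,i}/2 · ‖θ^k - θ^{τ_i^{k-1}}‖²`.
-/

open scoped BigOperators RealInnerProductSpace

open Finset

theorem norm_sub_sub_fderiv_le_of_lipschitz_fderiv {E G : Type*}
    [NormedAddCommGroup E] [NormedSpace ℝ E] [NormedAddCommGroup G] [NormedSpace ℝ G]
    {φ : E → G} {C : ℝ} (hφ : Differentiable ℝ φ)
    (hLip : ∀ a b, ‖fderiv ℝ φ a - fderiv ℝ φ b‖ ≤ C * ‖a - b‖) (x y : E) :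
    ‖φ x - φ y - fderiv ℝ φ y (x - y)‖ ≤ C / 2 * ‖x - y‖ ^ 2 := by
  set v := x - y
  set A := fderiv ℝ φ y
  -- `ψ 0 = 0` and `‖ψ' t‖ ≤ C ‖v‖² t`, so comparing with `C ‖v‖² t² / 2` bounds `‖ψ 1‖`
  set ψ : ℝ → G := fun t => φ (y + t • v) - φ y - t • A v with hψ
  have hψ' : ∀ t : ℝ, HasDerivAt ψ (fderiv ℝ φ (y + t • v) v - A v) t := by
    intro t
    have hline : HasDerivAt (fun t : ℝ => y + t • v) v t := by
      simpa using ((hasDerivAt_id t).smul_const v).const_add y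
    have hcomp := (hφ (y + t • v)).hasFDerivAt.comp_hasDerivAt t hline
    exact ((hcomp.sub_const (φ y)).sub ((hasDerivAt_id t).smul_const (A v))).congr_deriv
      (by simp)
  have hB : ∀ t : ℝ, HasDerivAt (fun t : ℝ => C * ‖v‖ ^ 2 * (t ^ 2 / 2)) (C * ‖v‖ ^ 2 * t) t :=
    fun t => (((hasDerivAt_pow 2 t).div_const 2).const_mul (C * ‖v‖ ^ 2)).congr_deriv
      (by push_cast; ring)
  have hderiv_le : ∀ t ∈ Set.Ico (0 : ℝ) 1,
      ‖fderiv ℝ φ (y + t • v) v - A v‖ ≤ C * ‖v‖ ^ 2 * t := by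
    intro t ht
    calc ‖fderiv ℝ φ (y + t • v) v - A v‖
        ≤ ‖fderiv ℝ φ (y + t • v) - A‖ * ‖v‖ := (fderiv ℝ φ (y + t • v) - A).le_opNorm v
      _ ≤ C * ‖t • v‖ * ‖v‖ := by
          gcongr
          simpa using hLip (y + t • v) y
      _ = C * ‖v‖ ^ 2 * t := by
          rw [norm_smul, Real.norm_eq_abs, abs_of_nonneg ht.1]; ring
  have hψ1 : ‖ψ 1‖ ≤ C * ‖v‖ ^ 2 * (1 ^ 2 / 2) :=
    image_norm_le_of_norm_deriv_right_le_deriv_boundary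
      (fun t _ => (hψ' t).continuousAt.continuousWithinAt) (fun t _ => (hψ' t).hasDerivWithinAt)
      (by simp [hψ]) hB hderiv_le (Set.right_mem_Icc.2 zero_le_one)
  have hψ1_eq : ψ 1 = φ x - φ y - A v := by simp [hψ, v]
  rw [hψ1_eq] at hψ1
  linarith

theorem ContDiff.differentiable_gradient {E : Type*} [NormedAddCommGroup E]
    [InnerProductSpace ℝ E] [CompleteSpace E] {f : E → ℝ} (hf : ContDiff ℝ 2 f) :
    Differentiable ℝ (gradient f) :=
  ((InnerProductSpace.toDual ℝ E).symm.contDiff.comp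
    (hf.fderiv_right (m := 1) (by norm_num))).differentiable one_ne_zero

theorem gradient_const_mul_sum {E ι : Type*} [NormedAddCommGroup E] [InnerProductSpace ℝ E]
    [CompleteSpace E] {f : ι → E → ℝ} (s : Finset ι) (c : ℝ) {x : E}
    (hf : ∀ i ∈ s, DifferentiableAt ℝ (f i) x) :
    gradient (fun x => c * ∑ i ∈ s, f i x) x = c • ∑ i ∈ s, gradient (f i) x := by
  have hderiv : HasFDerivAt (fun x => c * ∑ i ∈ s, f i x) (c • ∑ i ∈ s, fderiv ℝ (f i) x) x :=
    (HasFDerivAt.fun_sum fun i hi => (hf i hi).hasFDerivAt).const_mul c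
  simp only [gradient, hderiv.fderiv, map_smul, map_sum]

theorem norm_sub_smul_sum_le {ι E : Type*} [Fintype ι] [DecidableEq ι]
    [NormedAddCommGroup E] [NormedSpace ℝ E] {D : ι → E} {b : ι → ℝ} (hD : ∀ i, ‖D i‖ ≤ b i)
    (j : ι) {c : ℝ} (hc₀ : 0 ≤ c) (hc₁ : c ≤ 1) :
    ‖D j - c • ∑ i, D i‖ ≤ c * ∑ i ∈ univ.erase j, b i + (1 - c) * b j := by
  have hsplit : D j - c • ∑ i, D i = (1 - c) • D j - c • ∑ i ∈ univ.erase j, D i := by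
    rw [← add_sum_erase _ _ (mem_univ j), smul_add, sub_smul, one_smul]
    abel
  have hsum : ‖∑ i ∈ univ.erase j, D i‖ ≤ ∑ i ∈ univ.erase j, b i :=
    (norm_sum_le _ _).trans (sum_le_sum fun i _ => hD i)
  rw [hsplit]
  calc ‖(1 - c) • D j - c • ∑ i ∈ univ.erase j, D i‖
      ≤ (1 - c) * ‖D j‖ + c * ‖∑ i ∈ univ.erase j, D i‖ := by
        refine (norm_sub_le _ _).trans_eq ?_
        rw [norm_smul, norm_smul, Real.norm_of_nonneg (by linarith), Real.norm_of_nonneg hc₀]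
    _ ≤ c * ∑ i ∈ univ.erase j, b i + (1 - c) * b j := by
        nlinarith [hD j, mul_le_mul_of_nonneg_left hsum hc₀]

theorem sucag_error_bound_one_general
    (d N : ℕ)
    -- the component functions and Assumption A1
    (f : Fin N → EuclideanSpace ℝ (Fin d) → ℝ)
    (hsmooth : ∀ i, ContDiff ℝ 2 (f i))
    (LH : Fin N → ℝ)
    (hLH : ∀ i x y, ‖fderiv ℝ (gradient (f i)) x - fderiv ℝ (gradient (f i)) y‖
      ≤ LH i * ‖x - y‖)
    -- the sum function, Assumptions A2 and A3
    (F : EuclideanSpace ℝ (Fin d) → ℝ)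
    (hF : F = fun x => (N : ℝ)⁻¹ * ∑ i, f i x)
    -- the SUCAG iterates
    (idx : ℕ → Fin N)
    (τ : ℕ → Fin N → ℕ)
    (θ : ℕ → EuclideanSpace ℝ (Fin d))
    (gA : Fin N → ℕ → EuclideanSpace ℝ (Fin d) → EuclideanSpace ℝ (Fin d))
    (hgA : ∀ i k x, gA i k x = gradient (f i) (θ (τ k i))
      + (fderiv ℝ (gradient (f i)) (θ (τ k i))) (x - θ (τ k i)))
    (g : ℕ → EuclideanSpace ℝ (Fin d))
    (hg : ∀ k, g k = (gradient (f (idx k)) (θ k) - gA (idx k) k (θ k))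
      + (N : ℝ)⁻¹ • ∑ i, gA i k (θ k))
    -- the gradient-approximation error
    (e : ℕ → EuclideanSpace ℝ (Fin d))
    (he : ∀ k, e k = g k - gradient F (θ k)) :
    ∀ k, 1 ≤ k →
      ‖e k‖ ≤ (1 / (2 * (N : ℝ)))
          * ∑ i ∈ Finset.univ.erase (idx k), LH i * ‖θ k - θ (τ k i)‖ ^ 2
        + (1 / 2) * (1 - 1 / (N : ℝ)) * LH (idx k)
          * ‖θ k - θ (τ k (idx k))‖ ^ 2 := by
  intro k _
  set D : Fin N → EuclideanSpace ℝ (Fin d) := fun i => gradient (f i) (θ k) - gA i k (θ k)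
  have hgradF : gradient F (θ k) = (N : ℝ)⁻¹ • ∑ i, gradient (f i) (θ k) := by
    rw [hF]
    exact gradient_const_mul_sum _ _ fun i _ =>
      ((hsmooth i).differentiable (by norm_num)).differentiableAt
  have he_eq : e k = D (idx k) - (N : ℝ)⁻¹ • ∑ i, D i := by
    simp only [he, hg, hgradF, D, sum_sub_distrib, smul_sub]
    abel
  have hD : ∀ i, ‖D i‖ ≤ LH i / 2 * ‖θ k - θ (τ k i)‖ ^ 2 := fun i => by
    simpa only [D, hgA, sub_add_eq_sub_sub] using norm_sub_sub_fderiv_le_of_lipschitz_fderiv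
      (hsmooth i).differentiable_gradient (hLH i) (θ k) (θ (τ k i))
  rw [he_eq]
  refine (norm_sub_smul_sum_le hD (idx k) (by positivity) (Nat.cast_inv_le_one N)).trans_eq ?_
  rw [mul_sum, mul_sum]
  ring_nf

/-- first bound on the SUCAG gradient-approximation error `e^k`. -/
theorem sucag_error_bound_one
    (d N : ℕ) (hd : 1 ≤ d) (hN : 1 ≤ N)
    -- the component functions and Assumption A1
    (f : Fin N → EuclideanSpace ℝ (Fin d) → ℝ)
    (hconv : ∀ i, ConvexOn ℝ Set.univ (f i))
    (hsmooth : ∀ i, ContDiff ℝ 2 (f i))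
    (LH : Fin N → ℝ) (hLHpos : ∀ i, 0 < LH i)
    (hLH : ∀ i x y, ‖fderiv ℝ (gradient (f i)) x - fderiv ℝ (gradient (f i)) y‖
      ≤ LH i * ‖x - y‖)
    (LbarH : ℝ) (hLbarH : IsGreatest (Set.range LH) LbarH)
    -- the sum function, Assumptions A2 and A3
    (F : EuclideanSpace ℝ (Fin d) → ℝ)
    (hF : F = fun x => (N : ℝ)⁻¹ * ∑ i, f i x)
    (L μ : ℝ) (hL : 0 < L) (hμ : 0 < μ)
    (hFLip : ∀ x y, ‖gradient F x - gradient F y‖ ≤ L * ‖x - y‖)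
    (hstr : ∀ x y : EuclideanSpace ℝ (Fin d),
      F x + ⟪gradient F x, y - x⟫ + μ / 2 * ‖y - x‖ ^ 2 ≤ F y)
    (θstar : EuclideanSpace ℝ (Fin d)) (hmin : ∀ x, F θstar ≤ F x)
    -- the SUCAG iterates
    (γ : ℝ) (hγ : 0 < γ)
    (idx : ℕ → Fin N)
    (τ : ℕ → Fin N → ℕ) (hτ : ∀ k, 1 ≤ k → ∀ i, τ k i < k)
    (θ : ℕ → EuclideanSpace ℝ (Fin d))
    (gA : Fin N → ℕ → EuclideanSpace ℝ (Fin d) → EuclideanSpace ℝ (Fin d))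
    (hgA : ∀ i k x, gA i k x = gradient (f i) (θ (τ k i))
      + (fderiv ℝ (gradient (f i)) (θ (τ k i))) (x - θ (τ k i)))
    (g : ℕ → EuclideanSpace ℝ (Fin d))
    (hg : ∀ k, g k = (gradient (f (idx k)) (θ k) - gA (idx k) k (θ k))
      + (N : ℝ)⁻¹ • ∑ i, gA i k (θ k))
    (hrec : ∀ k, 1 ≤ k → θ (k + 1) = θ k - γ • g k)
    -- the gradient-approximation error
    (e : ℕ → EuclideanSpace ℝ (Fin d))
    (he : ∀ k, e k = g k - gradient F (θ k)) :
    ∀ k, 1 ≤ k →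
      ‖e k‖ ≤ (1 / (2 * (N : ℝ)))
          * ∑ i ∈ Finset.univ.erase (idx k), LH i * ‖θ k - θ (τ k i)‖ ^ 2
        + (1 / 2) * (1 - 1 / (N : ℝ)) * LH (idx k)
          * ‖θ k - θ (τ k (idx k))‖ ^ 2 :=
  sucag_error_bound_one_general d N f hsmooth LH hLH F hF idx τ θ gA hgA g hg e he
end

section
/- (Lemma on nonlinear delayed recursions, part i.) Let R : ℕ → ℝ be nonnegative with R(0) > 0, let p ∈ (0,1), J ≥ 1, and for j = 1,…,J let η_j > 1, q_j ≥ 0, and let m₁ⱼ^(k) ≥ 1 and m₂ⱼ^(k) ≥ 0 be given for each k ≥ 0. Assume R(k+1) ≤ p R(k) + ∑_{j=1}^J q_j m₁ⱼ^(k) max_{(k − m₂ⱼ^(k))_+ ≤ ℓ ≤ k} R(ℓ)^{η_j} for all k ≥ 0, where the max is over integers ℓ. Fix δ ∈ (p, 1), define ξ_j*(δ) := inf_{k ≥ 0} ( log(m₁ⱼ^(k))/log δ + η_j (k − m₂ⱼ^(k))_+ − k ), and assume ξ_j*(δ) > −∞ and q_j ≤ (1/R(0)^{η_j − 1}) ·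 δ^{−ξ_j*(δ)} (δ − p)/J for every j. Then R(k) ≤ δ^k R(0) for all k ≥ 0. -/
/-!
Strong induction on `k`. If `R ℓ ≤ δ ^ ℓ * R 0` for all `ℓ ≤ k`, every index in the `j`-th
delayed window is at least `x = (k - m₂ⱼ^(k))₊`, so the window maximum is at most
`δ ^ (η_j x) * R 0 ^ η_j`. Writing `m₁ⱼ^(k) = δ ^ logb δ m₁ⱼ^(k)`, the definition of `ξ_j*(δ)`
and the bound on `q_j` make the `j`-th nonlinear term at most `(δ - p) / J * δ ^ k * R 0`,
so the recursion gives `R (k + 1) ≤ p δ ^ k R 0 + (δ - p) δ ^ k R 0 = δ ^ (k + 1) R 0`.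
-/

open Finset Real

section

variable {δ R₀ η : ℝ}

lemma rpow_le_of_le_geometric {r x : ℝ} {ℓ : ℕ} (hδ0 : 0 < δ) (hδ1 : δ ≤ 1) (hR₀ : 0 ≤ R₀)
    (hη : 0 ≤ η) (hr : 0 ≤ r) (hrℓ : r ≤ δ ^ ℓ * R₀) (hxℓ : x ≤ ℓ) :
    r ^ η ≤ δ ^ (η * x) * R₀ ^ η :=
  calc r ^ η ≤ (δ ^ ℓ * R₀) ^ η := rpow_le_rpow hr hrℓ hη
    _ = δ ^ (η * ℓ) * R₀ ^ η := by
      rw [mul_rpow (by positivity) hR₀, ← rpow_natCast, ← rpow_mul hδ0.le, mul_comm η]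
    _ ≤ δ ^ (η * x) * R₀ ^ η :=
      mul_le_mul_of_nonneg_right
        (rpow_le_rpow_of_exponent_ge hδ0 hδ1 (mul_le_mul_of_nonneg_left hxℓ hη)) (by positivity)

lemma sup'_rpow_le_of_le_geometric {R : ℕ → ℝ} {s : Finset ℕ} (hs : s.Nonempty) {x : ℝ}
    (hδ0 : 0 < δ) (hδ1 : δ ≤ 1) (hR₀ : 0 ≤ R₀) (hη : 0 ≤ η) (hR : ∀ ℓ, 0 ≤ R ℓ)
    (hgeom : ∀ ℓ ∈ s, R ℓ ≤ δ ^ ℓ * R₀) (hx : ∀ ℓ ∈ s, x ≤ ℓ) :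
    s.sup' hs (fun ℓ => R ℓ ^ η) ≤ δ ^ (η * x) * R₀ ^ η :=
  sup'_le hs _ fun ℓ hℓ =>
    rpow_le_of_le_geometric hδ0 hδ1 hR₀ hη (hR ℓ) (hgeom ℓ hℓ) (hx ℓ hℓ)

lemma coeff_mul_rpow_le_geometric {ξ m x c : ℝ} {n : ℕ} (hδ0 : 0 < δ) (hδ1 : δ < 1)
    (hR₀ : 0 < R₀) (hm : 0 < m) (hc : 0 ≤ c) (hξ : ξ ≤ logb δ m + η * x - n) :
    1 / R₀ ^ (η - 1) * δ ^ (-ξ) * c * m * (δ ^ (η * x) * R₀ ^ η) ≤ c * (δ ^ n * R₀) := by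
  have hδpow : δ ^ (-ξ) * δ ^ logb δ m * δ ^ (η * x) = δ ^ (logb δ m + η * x - ξ) := by
    rw [← rpow_add hδ0, ← rpow_add hδ0]
    ring_nf
  have hRpow : R₀ ^ η / R₀ ^ (η - 1) = R₀ := by
    rw [← rpow_sub hR₀, sub_sub_cancel, rpow_one]
  rw [← rpow_logb hδ0 hδ1.ne hm]
  calc 1 / R₀ ^ (η - 1) * δ ^ (-ξ) * c * δ ^ logb δ m * (δ ^ (η * x) * R₀ ^ η)
      = c * ((δ ^ (-ξ) * δ ^ logb δ m * δ ^ (η * x)) * (R₀ ^ η / R₀ ^ (η - 1))) := by ring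
    _ = c * (δ ^ (logb δ m + η * x - ξ) * R₀) := by rw [hδpow, hRpow]
    _ ≤ c * (δ ^ (n : ℝ) * R₀) :=
      mul_le_mul_of_nonneg_left (mul_le_mul_of_nonneg_right
        (rpow_le_rpow_of_exponent_ge hδ0 hδ1.le (by linarith)) hR₀.le) hc
    _ = c * (δ ^ n * R₀) := by rw [rpow_natCast]

lemma delayed_term_le_of_le_geometric {R : ℕ → ℝ} {ξ q m₁ m₂ c : ℝ} {n : ℕ}
    (hδ0 : 0 < δ) (hδ1 : δ < 1) (hR₀ : 0 < R₀) (hη : 0 ≤ η) (hm₁ : 0 < m₁) (hc : 0 ≤ c)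
    (hR : ∀ ℓ, 0 ≤ R ℓ) (hgeom : ∀ ℓ ≤ n, R ℓ ≤ δ ^ ℓ * R₀)
    (hξ : ξ ≤ logb δ m₁ + η * max ((n : ℝ) - m₂) 0 - n)
    (hq : q ≤ 1 / R₀ ^ (η - 1) * δ ^ (-ξ) * c) (hs : (Icc ⌈(n : ℝ) - m₂⌉₊ n).Nonempty) :
    q * m₁ * (Icc ⌈(n : ℝ) - m₂⌉₊ n).sup' hs (fun ℓ => R ℓ ^ η) ≤ c * (δ ^ n * R₀) := by
  set S := (Icc ⌈(n : ℝ) - m₂⌉₊ n).sup' hs (fun ℓ => R ℓ ^ η)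
  have hwindow : ∀ ℓ ∈ Icc ⌈(n : ℝ) - m₂⌉₊ n, max ((n : ℝ) - m₂) 0 ≤ ℓ := fun ℓ hℓ =>
    max_le (Nat.ceil_le.mp (mem_Icc.mp hℓ).1) ℓ.cast_nonneg
  have hS : S ≤ δ ^ (η * max ((n : ℝ) - m₂) 0) * R₀ ^ η :=
    sup'_rpow_le_of_le_geometric hs hδ0 hδ1.le hR₀.le hη hR
      (fun ℓ hℓ => hgeom ℓ (mem_Icc.mp hℓ).2) hwindow
  have hS0 : 0 ≤ S :=
    le_sup'_of_le _ (right_mem_Icc.mpr (nonempty_Icc.mp hs)) (rpow_nonneg (hR n) η)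
  have hQ0 : 0 ≤ 1 / R₀ ^ (η - 1) * δ ^ (-ξ) * c := by positivity
  calc q * m₁ * S ≤ 1 / R₀ ^ (η - 1) * δ ^ (-ξ) * c * m₁ * S :=
        mul_le_mul_of_nonneg_right (mul_le_mul_of_nonneg_right hq hm₁.le) hS0
    _ ≤ 1 / R₀ ^ (η - 1) * δ ^ (-ξ) * c * m₁ * (δ ^ (η * max ((n : ℝ) - m₂) 0) * R₀ ^ η) :=
        mul_le_mul_of_nonneg_left hS (mul_nonneg hQ0 hm₁.le)
    _ ≤ c * (δ ^ n * R₀) := coeff_mul_rpow_le_geometric hδ0 hδ1 hR₀ hm₁ hc hξ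

end

lemma sum_fin_div_card_le (J : ℕ) {a : ℝ} (ha : 0 ≤ a) : ∑ _j : Fin J, a / J ≤ a := by
  rcases J.eq_zero_or_pos with rfl | _
  · simpa using ha
  · simp [field]

/-- lemma on nonlinear delayed recursions, part (i): linear
convergence `R(k) ≤ δ^k R(0)`. Real powers (`rpow`) are used for the
exponents `η_j` and `−ξ_j*(δ)`. -/
theorem nonlinear_delayed_recursion_linear_convergence
    (J : ℕ)
    (R : ℕ → ℝ) (hRnonneg : ∀ k, 0 ≤ R k) (hR0 : 0 < R 0)
    (p : ℝ) (hp0 : 0 < p)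
    (η q : Fin J → ℝ) (hη : ∀ j, 1 < η j)
    (m₁ m₂ : Fin J → ℕ → ℝ)
    (hm₁ : ∀ j k, 1 ≤ m₁ j k) (hm₂ : ∀ j k, 0 ≤ m₂ j k)
    (hrec : ∀ k : ℕ, R (k + 1) ≤ p * R k + ∑ j, q j * m₁ j k *
      (Finset.Icc (⌈(k : ℝ) - m₂ j k⌉₊) k).sup'
        (by
          refine Finset.nonempty_Icc.mpr (Nat.ceil_le.mpr ?_)
          have := hm₂ j k
          linarith)
        (fun ℓ => R ℓ ^ (η j)))
    (δ : ℝ) (hδp : p < δ) (hδ1 : δ < 1)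
    (hbdd : ∀ j, BddBelow (Set.range fun k : ℕ =>
      Real.log (m₁ j k) / Real.log δ + η j * max ((k : ℝ) - m₂ j k) 0 - (k : ℝ)))
    (hq : ∀ j, q j ≤ (1 / R 0 ^ (η j - 1)) *
      δ ^ (-(⨅ k : ℕ, (Real.log (m₁ j k) / Real.log δ
        + η j * max ((k : ℝ) - m₂ j k) 0 - (k : ℝ)))) * (δ - p) / (J : ℝ)) :
    ∀ k, R k ≤ δ ^ k * R 0 := by
  have hδ0 : 0 < δ := hp0.trans hδp
  have hcoeff : 0 ≤ (δ - p) / J := div_nonneg (sub_nonneg.mpr hδp.le) J.cast_nonneg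
  intro k
  induction k using Nat.strong_induction_on with
  | _ k IH =>
    cases k with
    | zero => simp
    | succ n =>
      have hgeom : ∀ ℓ ≤ n, R ℓ ≤ δ ^ ℓ * R 0 := fun ℓ hℓ => IH ℓ (Nat.lt_succ_of_le hℓ)
      calc R (n + 1) ≤ p * R n + ∑ j, q j * m₁ j n * _ := hrec n
        _ ≤ p * (δ ^ n * R 0) + ∑ _j : Fin J, (δ - p) / J * (δ ^ n * R 0) := by
          refine add_le_add (mul_le_mul_of_nonneg_left (hgeom n le_rfl) hp0.le)
            (sum_le_sum fun j _ => ?_)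
          exact delayed_term_le_of_le_geometric hδ0 hδ1 hR0 (zero_lt_one.trans (hη j)).le
            (one_pos.trans_le (hm₁ j n)) hcoeff hRnonneg hgeom (ciInf_le (hbdd j) n)
            ((hq j).trans_eq (mul_div_assoc _ _ _)) _
        _ ≤ p * (δ ^ n * R 0) + (δ - p) * (δ ^ n * R 0) := by
          simp only [← sum_mul]
          gcongr
          exact sum_fin_div_card_le J (sub_nonneg.mpr hδp.le)
        _ = δ ^ (n + 1) * R 0 := by ring
end

section
/- (Lemma on nonlinear delayed recursions, part ii.) Let R : ℕ → ℝ be nonnegative with R(0) > 0, let p ∈ (0,1), J ≥ 1, and for j = 1,…,J let η_j > 1, q_j ≥ 0, and let m₁ⱼ^(k) ≥ 1 and m₂ⱼ^(k) ≥ 0 be given for each k ≥ 0, with R(k+1) ≤ p R(k) + ∑_{j=1}^J q_j m₁ⱼ^(k) max_{(k − m₂ⱼ^(k))_+ ≤ ℓ ≤ k} R(ℓ)^{η_j} for all k ≥ 0. Set η := min_j η_j > 1 and fix δ ∈ (p, 1). Assume the growth conditions: there exist c₀, c₁, m₀ ≥ 1 and β ∈ (0, (η−1)/η) such that for all j and all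 k ≥ 1, log(m₁ⱼ^(k)) ≤ c₀ + c₁ log k, log(m₁ⱼ^(0)) ≤ c₀, and m₂ⱼ^(k) ≤ m₀ + ((η−1)/η − β) k for all k ≥ 0. Assume also q_j ≤ (1/R(0)^{η_j − 1}) · δ^{−ξ_j*(δ)} (δ − p)/J for every j, where ξ_j*(δ) := inf_{k ≥ 0} ( log(m₁ⱼ^(k))/log δ + η_j (k − m₂ⱼ^(k))_+ − k ). Then there exists a sequence R̄ : ℕ → ℝ with R̄(k) ≥ R(k) for all k ≥ 0 and lim_{k→∞} R̄(k+1)/R̄(k) = p. -/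
/-!
Let `N k` be the nonlinear term of the recursion evaluated along `R`, and let `R̄` solve the
linear recursion `R̄ (k + 1) = p R̄ k + N k`, `R̄ 0 = R 0`. Then `R ≤ R̄`, `R̄ k ≥ R 0 pᵏ` and
`R̄ (k + 1) / R̄ k = p + N k / R̄ k`, so it suffices to show `N k = O(sᵏ)` for some `s < p`.

The condition on the `q_j` is exactly what makes `R k ≤ R 0 δᵏ` propagate by strong induction.
The bound on `m₂` puts every index of the window at time `k` above `(1/η + β) k - m₀`, so a
bound `R ℓ ≤ A γ^ℓ` yields `N k ≤ C k^c₁ (γ^θ)ᵏ` with `θ = 1 + βη > 1`. Feeding this into the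
linear recursion improves the rate `γ` to `max ν (γ^θ')` for any `ν > p` and `1 < θ' < θ`;
after finitely many rounds the rate is a `ν` with `ν^θ < p`.
-/

open Filter Topology Asymptotics

theorem tendsto_rpow_mul_pow_atTop_nhds_zero (c : ℝ) {r : ℝ} (hr₀ : 0 ≤ r) (hr₁ : r < 1) :
    Tendsto (fun k : ℕ => (k : ℝ) ^ c * r ^ k) atTop (𝓝 0) := by
  refine squeeze_zero (fun k => by positivity) (fun k => ?_)
    (tendsto_pow_const_mul_const_pow_of_lt_one ⌈c⌉₊ hr₀ hr₁)
  rcases k.eq_zero_or_pos with rfl | hk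
  · rcases eq_or_ne c 0 with rfl | hc
    · simp
    · simp [Real.zero_rpow hc]
  · rw [← Real.rpow_natCast (k : ℝ) ⌈c⌉₊]
    gcongr
    · exact_mod_cast hk
    · exact Nat.le_ceil c

theorem eventually_rpow_mul_pow_le_pow (c : ℝ) {r s : ℝ} (hr : 0 ≤ r) (hrs : r < s) :
    ∀ᶠ k : ℕ in atTop, (k : ℝ) ^ c * r ^ k ≤ s ^ k := by
  have hs : 0 < s := hr.trans_lt hrs
  filter_upwards [(tendsto_rpow_mul_pow_atTop_nhds_zero c (div_nonneg hr hs.le)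
    ((div_lt_one hs).mpr hrs)).eventually_le_const zero_lt_one] with k hk
  rwa [div_pow, mul_div_assoc', div_le_one (by positivity)] at hk

theorem bddBelow_range_mul_add_mul_log {a : ℝ} (ha : 0 < a) (b : ℝ) :
    BddBelow (Set.range fun k : ℕ => a * k + b * Real.log k) := by
  have hlog : (fun x => b * Real.log x) =o[atTop] fun x => a * x :=
    (Real.isLittleO_log_id_atTop.const_mul_left b).const_mul_right ha.ne'
  have hequiv : (fun x => b * Real.log x + a * x) ~[atTop] fun x => a * x :=
    hlog.add_isEquivalent IsEquivalent.refl
  have htend : Tendsto (fun x => b * Real.log x + a * x) atTop atTop :=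
    hequiv.symm.tendsto_atTop (tendsto_id.const_mul_atTop ha)
  refine bddBelow_range_of_tendsto_atTop_atTop ?_
  exact (htend.comp tendsto_natCast_atTop_atTop).congr fun k => add_comm _ _

theorem le_exp_mul_rpow_of_log_le {m x c₀ c₁ : ℝ} (hm : 0 < m) (hx : 0 < x)
    (h : Real.log m ≤ c₀ + c₁ * Real.log x) : m ≤ Real.exp c₀ * x ^ c₁ :=
  calc m = Real.exp (Real.log m) := (Real.exp_log hm).symm
    _ ≤ Real.exp (c₀ + Real.log x * c₁) := Real.exp_le_exp.mpr (by linarith)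
    _ = Real.exp c₀ * x ^ c₁ := by rw [Real.exp_add, Real.rpow_def_of_pos hx]

theorem exists_lt_lt_one_rpow_lt {p θ : ℝ} (hp₀ : 0 < p) (hp₁ : p < 1) (hθ : 1 < θ) :
    ∃ ν, p < ν ∧ ν < 1 ∧ ν ^ θ < p := by
  have hθ₀ : 0 < θ := one_pos.trans hθ
  have hpt : p < p ^ θ⁻¹ := by
    simpa using Real.rpow_lt_rpow_of_exponent_gt hp₀ hp₁ (inv_lt_one_of_one_lt₀ hθ)
  obtain ⟨ν, hpν, hνt⟩ := exists_between hpt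
  refine ⟨ν, hpν, hνt.trans (Real.rpow_lt_one hp₀.le hp₁ (inv_pos.mpr hθ₀)), ?_⟩
  calc ν ^ θ < (p ^ θ⁻¹) ^ θ := Real.rpow_lt_rpow (hp₀.trans hpν).le hνt hθ₀
    _ = p := Real.rpow_inv_rpow hp₀.le hθ₀.ne'

theorem max_rpow_lt_max_rpow {ν x θ θ' : ℝ} (hν₀ : 0 < ν) (hν₁ : ν < 1) (hx₀ : 0 < x)
    (hx₁ : x < 1) (hθ' : 1 ≤ θ') (hθ : θ' < θ) : max ν x ^ θ < max ν (x ^ θ') := by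
  rcases le_total ν x with h | h
  · rw [max_eq_right h]
    exact (Real.rpow_lt_rpow_of_exponent_gt hx₀ hx₁ hθ).trans_le (le_max_right _ _)
  · rw [max_eq_left h]
    refine (Real.rpow_lt_rpow_of_exponent_gt hν₀ hν₁ (hθ'.trans_lt hθ)).trans_le ?_
    exact (Real.rpow_one ν).le.trans (le_max_left _ _)

section LinearRecursion

variable {S N : ℕ → ℝ} {p : ℝ}

theorem exists_le_mul_pow_of_le_mul_add {μ C : ℝ} (hp : 0 ≤ p) (hpμ : p < μ)
    (hS : ∀ k, S (k + 1) ≤ p * S k + N k) (hN : ∀ᶠ k in atTop, N k ≤ C * μ ^ k) :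
    ∃ A, ∀ k, S k ≤ A * μ ^ k := by
  obtain ⟨K, hK⟩ := eventually_atTop.mp hN
  have hμ : 0 < μ := hp.trans_lt hpμ
  set A := max ((Finset.range (K + 1)).sup' Finset.nonempty_range_add_one fun k => S k / μ ^ k)
    (C / (μ - p))
  have hinit : ∀ k ≤ K, S k ≤ A * μ ^ k := fun k hk => by
    have : S k / μ ^ k ≤ A :=
      (Finset.le_sup' (fun k => S k / μ ^ k) (Finset.mem_range_succ_iff.mpr hk)).trans
        (le_max_left _ _)
    rwa [div_le_iff₀ (by positivity)] at this
  have hC : C ≤ A * (μ - p) := (div_le_iff₀ (sub_pos.mpr hpμ)).mp (le_max_right _ _)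
  refine ⟨A, fun k => ?_⟩
  rcases le_total k K with hk | hk
  · exact hinit k hk
  induction k, hk using Nat.le_induction with
  | base => exact hinit K le_rfl
  | succ k hk ih =>
    calc S (k + 1) ≤ p * S k + N k := hS k
      _ ≤ p * (A * μ ^ k) + C * μ ^ k := add_le_add (mul_le_mul_of_nonneg_left ih hp) (hK k hk)
      _ ≤ p * (A * μ ^ k) + A * (μ - p) * μ ^ k := by gcongr
      _ = A * μ ^ (k + 1) := by ring

noncomputable def linearRecursion (p x₀ : ℝ) (N : ℕ → ℝ) : ℕ → ℝ
  | 0 => x₀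
  | k + 1 => p * linearRecursion p x₀ N k + N k

theorem le_linearRecursion (hp : 0 ≤ p) (hS : ∀ k, S (k + 1) ≤ p * S k + N k) :
    ∀ k, S k ≤ linearRecursion p (S 0) N k
  | 0 => le_rfl
  | k + 1 => (hS k).trans <|
      add_le_add_left (mul_le_mul_of_nonneg_left (le_linearRecursion hp hS k) hp) _

theorem mul_pow_le_linearRecursion {x₀ : ℝ} (hp : 0 ≤ p) (hN : ∀ k, 0 ≤ N k) :
    ∀ k, x₀ * p ^ k ≤ linearRecursion p x₀ N k
  | 0 => by simp [linearRecursion]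
  | k + 1 => by
    rw [linearRecursion, pow_succ]
    nlinarith [mul_le_mul_of_nonneg_left (mul_pow_le_linearRecursion (x₀ := x₀) hp hN k) hp, hN k]

theorem tendsto_linearRecursion_succ_div {x₀ s C : ℝ} (hp : 0 < p) (hx₀ : 0 < x₀)
    (hN : ∀ k, 0 ≤ N k) (hs : 0 ≤ s) (hsp : s < p) (hNs : ∀ᶠ k in atTop, N k ≤ C * s ^ k) :
    Tendsto (fun k => linearRecursion p x₀ N (k + 1) / linearRecursion p x₀ N k) atTop (𝓝 p) := by
  set X := linearRecursion p x₀ N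
  have hX : ∀ k, x₀ * p ^ k ≤ X k := mul_pow_le_linearRecursion hp.le hN
  have hX₀ : ∀ k, 0 < X k := fun k => (by positivity : 0 < x₀ * p ^ k).trans_le (hX k)
  have hratio : ∀ k, X (k + 1) / X k = p + N k / X k := fun k => by
    rw [show X (k + 1) = p * X k + N k from rfl, add_div, mul_div_cancel_right₀ _ (hX₀ k).ne']
  have hgeom := (tendsto_pow_atTop_nhds_zero_of_lt_one (div_nonneg hs hp.le)
    ((div_lt_one hp).mpr hsp)).const_mul (C / x₀)
  rw [mul_zero] at hgeom
  have hsmall : Tendsto (fun k => N k / X k) atTop (𝓝 0) := by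
    refine squeeze_zero' (Eventually.of_forall fun k => div_nonneg (hN k) (hX₀ k).le) ?_ hgeom
    filter_upwards [hNs] with k hk
    calc N k / X k ≤ C * s ^ k / (x₀ * p ^ k) :=
          div_le_div₀ ((hN k).trans hk) hk (by positivity) (hX k)
      _ = C / x₀ * (s / p) ^ k := by rw [div_pow]; field_simp
  simpa only [hratio, add_zero] using hsmall.const_add p

theorem exists_le_tendsto_succ_div {s C : ℝ} (hp : 0 < p) (hS₀ : 0 < S 0) (hN : ∀ k, 0 ≤ N k)
    (hs : 0 ≤ s) (hsp : s < p) (hS : ∀ k, S (k + 1) ≤ p * S k + N k)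
    (hNs : ∀ᶠ k in atTop, N k ≤ C * s ^ k) :
    ∃ X : ℕ → ℝ, (∀ k, S k ≤ X k) ∧ Tendsto (fun k => X (k + 1) / X k) atTop (𝓝 p) :=
  ⟨linearRecursion p (S 0) N, le_linearRecursion hp.le hS,
    tendsto_linearRecursion_succ_div hp hS₀ hN hs hsp hNs⟩

end LinearRecursion

theorem exists_le_mul_pow_of_bootstrap {R N : ℕ → ℝ} {p θ δ ν : ℝ} (hR : ∀ k, 0 ≤ R k)
    (hp : 0 ≤ p) (hθ : 1 < θ) (hδ₀ : 0 < δ) (hδ₁ : δ < 1) (hpν : p < ν) (hν₁ : ν < 1)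
    (hrec : ∀ k, R (k + 1) ≤ p * R k + N k)
    (hN : ∀ γ A s, 0 < γ → γ < 1 → (∀ k, R k ≤ A * γ ^ k) → γ ^ θ < s →
      ∃ C, ∀ᶠ k in atTop, N k ≤ C * s ^ k)
    (hδ : ∃ A, ∀ k, R k ≤ A * δ ^ k) : ∃ A, ∀ k, R k ≤ A * ν ^ k := by
  have hν₀ : 0 < ν := hp.trans_lt hpν
  obtain ⟨θ', hθ', hθ'θ⟩ := exists_between hθ
  have hstep : ∀ x, 0 < x → x < 1 → (∃ A, ∀ k, R k ≤ A * max ν x ^ k) →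
      ∃ A, ∀ k, R k ≤ A * max ν (x ^ θ') ^ k := by
    rintro x hx₀ hx₁ ⟨A, hA⟩
    obtain ⟨C, hC⟩ := hN _ A _ (lt_max_of_lt_left hν₀) (max_lt hν₁ hx₁) hA
      (max_rpow_lt_max_rpow hν₀ hν₁ hx₀ hx₁ hθ'.le hθ'θ)
    exact exists_le_mul_pow_of_le_mul_add hp (hpν.trans_le (le_max_left _ _)) hrec hC
  have hiter : ∀ n : ℕ, ∃ A, ∀ k, R k ≤ A * max ν (δ ^ (θ' ^ n)) ^ k := by
    intro n
    induction n with
    | zero =>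
      obtain ⟨A, hA⟩ := hδ
      have hA₀ : 0 ≤ A := by simpa using (hR 0).trans (hA 0)
      refine ⟨A, fun k => (hA k).trans ?_⟩
      rw [pow_zero, Real.rpow_one]
      gcongr
      exact le_max_right _ _
    | succ n ih =>
      rw [pow_succ, Real.rpow_mul hδ₀.le]
      exact hstep _ (by positivity) (Real.rpow_lt_one hδ₀.le hδ₁ (by positivity)) ih
  have hlim : Tendsto (fun n : ℕ => δ ^ (θ' ^ n)) atTop (𝓝 0) :=
    (tendsto_rpow_atTop_of_base_lt_one δ (by linarith) hδ₁).comp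
      (tendsto_pow_atTop_atTop_of_one_lt hθ')
  obtain ⟨n, hn⟩ := (hlim.eventually_le_const hν₀).exists
  obtain ⟨A, hA⟩ := hiter n
  exact ⟨A, by simpa only [max_eq_left hn] using hA⟩

section Window

theorem nonempty_Icc_ceil_sub {m : ℝ} (hm : 0 ≤ m) (k : ℕ) :
    (Finset.Icc ⌈(k : ℝ) - m⌉₊ k).Nonempty :=
  Finset.nonempty_Icc.mpr (Nat.ceil_le.mpr (by linarith))

variable {R : ℕ → ℝ} {k : ℕ}

theorem sup'_Icc_ceil_sub_rpow_nonneg {m η : ℝ} (hR : ∀ ℓ, 0 ≤ R ℓ)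
    (h : (Finset.Icc ⌈(k : ℝ) - m⌉₊ k).Nonempty) :
    0 ≤ (Finset.Icc ⌈(k : ℝ) - m⌉₊ k).sup' h fun ℓ => R ℓ ^ η :=
  (Real.rpow_nonneg (hR k) η).trans <|
    Finset.le_sup' (fun ℓ => R ℓ ^ η) (Finset.mem_Icc.mpr ⟨Finset.nonempty_Icc.mp h, le_rfl⟩)

theorem sup'_Icc_ceil_sub_rpow_le {m η B : ℝ} (hR : ∀ ℓ, 0 ≤ R ℓ) (hη : 0 ≤ η)
    (h : (Finset.Icc ⌈(k : ℝ) - m⌉₊ k).Nonempty)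
    (hB : ∀ ℓ : ℕ, (k : ℝ) - m ≤ ℓ → ℓ ≤ k → R ℓ ≤ B) :
    ((Finset.Icc ⌈(k : ℝ) - m⌉₊ k).sup' h fun ℓ => R ℓ ^ η) ≤ B ^ η :=
  Finset.sup'_le _ _ fun ℓ hℓ => by
    obtain ⟨h₁, h₂⟩ := Finset.mem_Icc.mp hℓ
    exact Real.rpow_le_rpow (hR ℓ) (hB ℓ (Nat.ceil_le.mp h₁) h₂) hη

theorem mul_mul_sup'_le_of_q_le {η q m m' δ ξ c : ℝ} (hR : ∀ ℓ, 0 ≤ R ℓ) (hR₀ : 0 < R 0)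
    (hδ₀ : 0 < δ) (hδ₁ : δ < 1) (hη : 0 ≤ η) (hq₀ : 0 ≤ q) (hm : 0 < m) (hc : 0 ≤ c)
    (hξ : ξ ≤ Real.log m / Real.log δ + η * max ((k : ℝ) - m') 0 - k)
    (hq : q ≤ 1 / R 0 ^ (η - 1) * δ ^ (-ξ) * c) (hRk : ∀ ℓ ≤ k, R ℓ ≤ R 0 * δ ^ ℓ)
    (h : (Finset.Icc ⌈(k : ℝ) - m'⌉₊ k).Nonempty) :
    q * m * ((Finset.Icc ⌈(k : ℝ) - m'⌉₊ k).sup' h fun ℓ => R ℓ ^ η) ≤ c * (R 0 * δ ^ k) := by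
  set e := max ((k : ℝ) - m') 0
  have hsup : ((Finset.Icc ⌈(k : ℝ) - m'⌉₊ k).sup' h fun ℓ => R ℓ ^ η) ≤ (R 0 * δ ^ e) ^ η := by
    refine sup'_Icc_ceil_sub_rpow_le hR hη h fun ℓ hℓ hℓk => (hRk ℓ hℓk).trans ?_
    rw [← Real.rpow_natCast]
    exact mul_le_mul_of_nonneg_left
      (Real.rpow_le_rpow_of_exponent_ge hδ₀ hδ₁.le (max_le hℓ (Nat.cast_nonneg ℓ))) hR₀.le
  have hpow : (R 0 * δ ^ e) ^ η = R 0 ^ (η - 1) * R 0 * δ ^ (η * e) := by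
    rw [Real.mul_rpow hR₀.le (by positivity), ← Real.rpow_mul hδ₀.le, Real.rpow_sub_one hR₀.ne',
      div_mul_cancel₀ _ hR₀.ne', mul_comm e η]
  have hm_eq : δ ^ (Real.log m / Real.log δ) = m := Real.rpow_logb hδ₀ hδ₁.ne hm
  have hexp : δ ^ (-ξ) * m * δ ^ (η * e) ≤ δ ^ (k : ℝ) := by
    rw [← hm_eq, ← Real.rpow_add hδ₀, ← Real.rpow_add hδ₀]
    exact Real.rpow_le_rpow_of_exponent_ge hδ₀ hδ₁.le (by linarith)
  have hR₁ : 0 < R 0 ^ (η - 1) := Real.rpow_pos_of_pos hR₀ _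
  calc q * m * ((Finset.Icc ⌈(k : ℝ) - m'⌉₊ k).sup' h fun ℓ => R ℓ ^ η)
      ≤ q * m * (R 0 ^ (η - 1) * R 0 * δ ^ (η * e)) := by
        rw [← hpow]; gcongr
    _ ≤ 1 / R 0 ^ (η - 1) * δ ^ (-ξ) * c * m * (R 0 ^ (η - 1) * R 0 * δ ^ (η * e)) := by gcongr
    _ = c * R 0 * (δ ^ (-ξ) * m * δ ^ (η * e)) := by field_simp
    _ ≤ c * R 0 * δ ^ (k : ℝ) := by gcongr
    _ = c * (R 0 * δ ^ k) := by rw [Real.rpow_natCast, mul_assoc]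

theorem mul_mul_sup'_le_of_le_geometric {η ηmin q m M m' A γ x : ℝ} (hR : ∀ ℓ, 0 ≤ R ℓ)
    (hA : 0 ≤ A) (hγ₀ : 0 < γ) (hγ₁ : γ < 1) (hRγ : ∀ ℓ, R ℓ ≤ A * γ ^ ℓ) (hηmin : 0 ≤ ηmin)
    (hη : ηmin ≤ η) (hq : 0 ≤ q) (hm₀ : 0 ≤ m) (hm : m ≤ M) (hx : x ≤ k - m')
    (hB : A * γ ^ x ≤ 1) (h : (Finset.Icc ⌈(k : ℝ) - m'⌉₊ k).Nonempty) :
    q * m * ((Finset.Icc ⌈(k : ℝ) - m'⌉₊ k).sup' h fun ℓ => R ℓ ^ η) ≤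
      q * M * (A * γ ^ x) ^ ηmin := by
  have hsup : ((Finset.Icc ⌈(k : ℝ) - m'⌉₊ k).sup' h fun ℓ => R ℓ ^ η) ≤ (A * γ ^ x) ^ η := by
    refine sup'_Icc_ceil_sub_rpow_le hR (hηmin.trans hη) h fun ℓ hℓ _ => (hRγ ℓ).trans ?_
    rw [← Real.rpow_natCast]
    exact mul_le_mul_of_nonneg_left (Real.rpow_le_rpow_of_exponent_ge hγ₀ hγ₁.le (hx.trans hℓ)) hA
  calc q * m * ((Finset.Icc ⌈(k : ℝ) - m'⌉₊ k).sup' h fun ℓ => R ℓ ^ η)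
      ≤ q * m * (A * γ ^ x) ^ ηmin := by
        gcongr
        exact hsup.trans (Real.rpow_le_rpow_of_exponent_ge' (by positivity) hB hηmin hη)
    _ ≤ q * M * (A * γ ^ x) ^ ηmin := by gcongr

end Window

theorem bddBelow_range_log_div_add_mul_max {m m' : ℕ → ℝ} {δ η a m₀ c₀ c₁ : ℝ} (hδ₀ : 0 < δ)
    (hδ₁ : δ < 1) (hη : 0 ≤ η) (haη : 1 < a * η)
    (hlog : ∀ k : ℕ, Real.log (m k) ≤ c₀ + c₁ * Real.log k)
    (hwin : ∀ k : ℕ, a * k - m₀ ≤ k - m' k) :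
    BddBelow (Set.range fun k : ℕ =>
      Real.log (m k) / Real.log δ + η * max ((k : ℝ) - m' k) 0 - k) := by
  have hlogδ : Real.log δ < 0 := Real.log_neg hδ₀ hδ₁
  obtain ⟨C, hC⟩ := bddBelow_range_mul_add_mul_log (sub_pos.mpr haη) (c₁ / Real.log δ)
  refine ⟨C + c₀ / Real.log δ - η * m₀, ?_⟩
  rintro _ ⟨k, rfl⟩
  have hCk : C ≤ (a * η - 1) * k + c₁ / Real.log δ * Real.log k := hC ⟨k, rfl⟩
  have hm : c₀ / Real.log δ + c₁ / Real.log δ * Real.log k ≤ Real.log (m k) / Real.log δ := by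
    rw [div_mul_eq_mul_div, ← add_div]
    exact div_le_div_of_nonpos_of_le hlogδ.le (hlog k)
  have hm' : η * (a * k - m₀) ≤ η * max ((k : ℝ) - m' k) 0 :=
    mul_le_mul_of_nonneg_left ((hwin k).trans (le_max_left _ _)) hη
  linarith

noncomputable def delayedTerm {J : ℕ} (R : ℕ → ℝ) (η q : Fin J → ℝ) (m₁ m₂ : Fin J → ℕ → ℝ)
    (hm₂ : ∀ j k, 0 ≤ m₂ j k) (k : ℕ) : ℝ :=
  ∑ j, q j * m₁ j k *
    (Finset.Icc ⌈(k : ℝ) - m₂ j k⌉₊ k).sup' (nonempty_Icc_ceil_sub (hm₂ j k) k) fun ℓ => R ℓ ^ η j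

section DelayedRecursion

variable {J : ℕ} {R : ℕ → ℝ} {η q : Fin J → ℝ} {m₁ m₂ : Fin J → ℕ → ℝ}
  (hm₂ : ∀ j k, 0 ≤ m₂ j k)

theorem delayedTerm_nonneg (hR : ∀ ℓ, 0 ≤ R ℓ) (hq : ∀ j, 0 ≤ q j) (hm₁ : ∀ j k, 0 ≤ m₁ j k)
    (k : ℕ) : 0 ≤ delayedTerm R η q m₁ m₂ hm₂ k :=
  Finset.sum_nonneg fun j _ =>
    mul_nonneg (mul_nonneg (hq j) (hm₁ j k)) (sup'_Icc_ceil_sub_rpow_nonneg hR _)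

theorem le_mul_pow_of_le_mul_add_delayedTerm {p δ : ℝ} {ξ : Fin J → ℝ} (hR : ∀ ℓ, 0 ≤ R ℓ)
    (hR₀ : 0 < R 0) (hp : 0 ≤ p) (hδp : p < δ) (hδ₁ : δ < 1) (hη : ∀ j, 0 ≤ η j)
    (hq₀ : ∀ j, 0 ≤ q j) (hm₁ : ∀ j k, 0 < m₁ j k)
    (hξ : ∀ j (k : ℕ), ξ j ≤ Real.log (m₁ j k) / Real.log δ + η j * max ((k : ℝ) - m₂ j k) 0 - k)
    (hq : ∀ j, q j ≤ 1 / R 0 ^ (η j - 1) * δ ^ (-ξ j) * (δ - p) / J)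
    (hrec : ∀ k, R (k + 1) ≤ p * R k + delayedTerm R η q m₁ m₂ hm₂ k) :
    ∀ k, R k ≤ R 0 * δ ^ k := by
  have hδ₀ : 0 < δ := hp.trans_lt hδp
  have hterm : ∀ k, (∀ ℓ ≤ k, R ℓ ≤ R 0 * δ ^ ℓ) →
      delayedTerm R η q m₁ m₂ hm₂ k ≤ (δ - p) * (R 0 * δ ^ k) := fun k hk =>
    calc delayedTerm R η q m₁ m₂ hm₂ k ≤ ∑ _j : Fin J, (δ - p) / J * (R 0 * δ ^ k) :=
          Finset.sum_le_sum fun j _ => mul_mul_sup'_le_of_q_le hR hR₀ hδ₀ hδ₁ (hη j) (hq₀ j)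
            (hm₁ j k) (by positivity) (hξ j k) (by rw [← mul_div_assoc]; exact hq j) hk _
      _ ≤ (δ - p) * (R 0 * δ ^ k) := by
        rw [Finset.sum_const, Finset.card_univ, Fintype.card_fin, nsmul_eq_mul, ← mul_assoc]
        gcongr
        rcases J.eq_zero_or_pos with rfl | hJ
        · simpa using hδp.le
        · exact (mul_div_cancel₀ _ (by positivity)).le
  intro k
  induction k using Nat.strong_induction_on with
  | _ k ih =>
    cases k with
    | zero => simp
    | succ k =>
      calc R (k + 1) ≤ p * R k + delayedTerm R η q m₁ m₂ hm₂ k := hrec k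
        _ ≤ p * (R 0 * δ ^ k) + (δ - p) * (R 0 * δ ^ k) :=
          add_le_add (mul_le_mul_of_nonneg_left (ih k k.lt_add_one) hp)
            (hterm k fun ℓ hℓ => ih ℓ (Nat.lt_add_one_of_le hℓ))
        _ = R 0 * δ ^ (k + 1) := by ring

theorem delayedTerm_eventually_le_pow {a ηmin m₀ c₀ c₁ A γ s : ℝ} (hR : ∀ ℓ, 0 ≤ R ℓ)
    (hq : ∀ j, 0 ≤ q j) (hm₁ : ∀ j k, 0 < m₁ j k)
    (hlog : ∀ j (k : ℕ), Real.log (m₁ j k) ≤ c₀ + c₁ * Real.log k)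
    (ha : 0 < a) (hηmin : 0 ≤ ηmin) (hη : ∀ j, ηmin ≤ η j)
    (hwin : ∀ j (k : ℕ), a * k - m₀ ≤ k - m₂ j k) (hγ₀ : 0 < γ) (hγ₁ : γ < 1)
    (hRγ : ∀ k, R k ≤ A * γ ^ k) (hs : γ ^ (a * ηmin) < s) :
    ∃ C, ∀ᶠ k in atTop, delayedTerm R η q m₁ m₂ hm₂ k ≤ C * s ^ k := by
  have hA : 0 ≤ A := by simpa using (hR 0).trans (hRγ 0)
  have hdecay : ∀ k : ℕ, A * γ ^ (a * k - m₀) = A * γ ^ (-m₀) * (γ ^ a) ^ k := fun k => by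
    rw [sub_eq_neg_add, Real.rpow_add hγ₀, Real.rpow_mul hγ₀.le, Real.rpow_natCast, mul_assoc]
  have htend : Tendsto (fun k : ℕ => A * γ ^ (a * k - m₀)) atTop (𝓝 0) := by
    simp_rw [hdecay]
    simpa using (tendsto_pow_atTop_nhds_zero_of_lt_one (by positivity)
      (Real.rpow_lt_one hγ₀.le hγ₁ ha)).const_mul (A * γ ^ (-m₀))
  have hpow : ∀ k : ℕ,
      (A * γ ^ (a * k - m₀)) ^ ηmin = (A * γ ^ (-m₀)) ^ ηmin * (γ ^ (a * ηmin)) ^ k := fun k => by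
    rw [hdecay, Real.mul_rpow (by positivity) (by positivity), ← Real.rpow_natCast,
      ← Real.rpow_natCast, ← Real.rpow_mul hγ₀.le, ← Real.rpow_mul hγ₀.le,
      ← Real.rpow_mul hγ₀.le, mul_right_comm]
  set C := (∑ j, q j) * Real.exp c₀ * (A * γ ^ (-m₀)) ^ ηmin
  have hC : 0 ≤ C := by have := Finset.sum_nonneg fun j (_ : j ∈ Finset.univ) => hq j; positivity
  refine ⟨C, ?_⟩
  filter_upwards [htend.eventually_le_const zero_lt_one, eventually_ge_atTop 1,
    eventually_rpow_mul_pow_le_pow c₁ (by positivity) hs] with k hB hk hpoly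
  have hk₀ : (0 : ℝ) < k := by exact_mod_cast hk
  calc delayedTerm R η q m₁ m₂ hm₂ k
      ≤ ∑ j, q j * (Real.exp c₀ * (k : ℝ) ^ c₁) * (A * γ ^ (a * k - m₀)) ^ ηmin :=
        Finset.sum_le_sum fun j _ => mul_mul_sup'_le_of_le_geometric hR hA hγ₀ hγ₁ hRγ hηmin
          (hη j) (hq j) (hm₁ j k).le (le_exp_mul_rpow_of_log_le (hm₁ j k) hk₀ (hlog j k))
          (hwin j k) hB _
    _ = C * ((k : ℝ) ^ c₁ * (γ ^ (a * ηmin)) ^ k) := by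
        rw [← Finset.sum_mul, ← Finset.sum_mul, hpow]
        ring
    _ ≤ C * s ^ k := by gcongr

end DelayedRecursion

/-- lemma on nonlinear delayed recursions, part (ii): existence of
an upper bound sequence `R̄` whose ratio `R̄(k+1)/R̄(k)` converges to `p`. -/
theorem nonlinear_delayed_recursion_asymptotic_rate
    (J : ℕ)
    (R : ℕ → ℝ) (hRnonneg : ∀ k, 0 ≤ R k) (hR0 : 0 < R 0)
    (p : ℝ) (hp0 : 0 < p)
    (η q : Fin J → ℝ) (hη : ∀ j, 1 < η j) (hq0 : ∀ j, 0 ≤ q j)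
    (m₁ m₂ : Fin J → ℕ → ℝ)
    (hm₁ : ∀ j k, 1 ≤ m₁ j k) (hm₂ : ∀ j k, 0 ≤ m₂ j k)
    (hrec : ∀ k : ℕ, R (k + 1) ≤ p * R k + ∑ j, q j * m₁ j k *
      (Finset.Icc (⌈(k : ℝ) - m₂ j k⌉₊) k).sup'
        (by
          refine Finset.nonempty_Icc.mpr (Nat.ceil_le.mpr ?_)
          have := hm₂ j k
          linarith)
        (fun ℓ => R ℓ ^ (η j)))
    -- η is the smallest of the exponents η_j
    (ηmin : ℝ) (hηmin : IsLeast (Set.range η) ηmin)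
    (δ : ℝ) (hδp : p < δ) (hδ1 : δ < 1)
    -- growth conditions on m₁ and m₂
    (c₀ c₁ m₀ β : ℝ)
    (hβ0 : 0 < β)
    (hgrowth₁ : ∀ j, ∀ k : ℕ, 1 ≤ k → Real.log (m₁ j k) ≤ c₀ + c₁ * Real.log k)
    (hgrowth₀ : ∀ j, Real.log (m₁ j 0) ≤ c₀)
    (hgrowth₂ : ∀ j, ∀ k : ℕ, m₂ j k ≤ m₀ + ((ηmin - 1) / ηmin - β) * k)
    -- step-size-type condition on the q_j
    (hq : ∀ j, q j ≤ (1 / R 0 ^ (η j - 1)) *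
      δ ^ (-(⨅ k : ℕ, (Real.log (m₁ j k) / Real.log δ
        + η j * max ((k : ℝ) - m₂ j k) 0 - (k : ℝ)))) * (δ - p) / (J : ℝ)) :
    ∃ Rbar : ℕ → ℝ, (∀ k, R k ≤ Rbar k) ∧
      Tendsto (fun k => Rbar (k + 1) / Rbar k) atTop (nhds p) := by
  obtain ⟨⟨j₀, hj₀⟩, hηmin_le⟩ := hηmin
  have hηmin₁ : 1 < ηmin := hj₀ ▸ hη j₀
  have hle : ∀ j, ηmin ≤ η j := fun j => hηmin_le ⟨j, rfl⟩
  have hη₀ : ∀ j, 0 ≤ η j := fun j => zero_le_one.trans (hη j).le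
  have hm₁₀ : ∀ j k, 0 < m₁ j k := fun j k => one_pos.trans_le (hm₁ j k)
  obtain ⟨a, ha⟩ : ∃ a, a = 1 / ηmin + β := ⟨_, rfl⟩
  have ha₀ : 0 < a := by rw [ha]; positivity
  have hθ : 1 < a * ηmin := by
    have : a * ηmin = 1 + β * ηmin := by rw [ha]; field_simp
    linarith [mul_pos hβ0 (zero_lt_one.trans hηmin₁)]
  have hwin : ∀ j (k : ℕ), a * k - m₀ ≤ k - m₂ j k := fun j k => by
    have : a * k - m₀ = k - (m₀ + ((ηmin - 1) / ηmin - β) * k) := by rw [ha]; field_simp; ring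
    linarith [hgrowth₂ j k]
  have hlog : ∀ j (k : ℕ), Real.log (m₁ j k) ≤ c₀ + c₁ * Real.log k := fun j k => by
    rcases k.eq_zero_or_pos with rfl | hk
    · simpa using hgrowth₀ j
    · exact hgrowth₁ j k hk
  have hrec' : ∀ k, R (k + 1) ≤ p * R k + delayedTerm R η q m₁ m₂ hm₂ k := hrec
  have hδrate : ∀ k, R k ≤ R 0 * δ ^ k :=
    le_mul_pow_of_le_mul_add_delayedTerm hm₂ hRnonneg hR0 hp0.le hδp hδ1 hη₀ hq0 hm₁₀
      (fun j k => ciInf_le (bddBelow_range_log_div_add_mul_max (hp0.trans hδp) hδ1 (hη₀ j)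
        (hθ.trans_le (by gcongr; exact hle j)) (hlog j) (hwin j)) k) hq hrec'
  have hdecay : ∀ γ A s, 0 < γ → γ < 1 → (∀ k, R k ≤ A * γ ^ k) → γ ^ (a * ηmin) < s →
      ∃ C, ∀ᶠ k in atTop, delayedTerm R η q m₁ m₂ hm₂ k ≤ C * s ^ k :=
    fun γ A s hγ₀ hγ₁ hRγ hs => delayedTerm_eventually_le_pow hm₂ hRnonneg hq0 hm₁₀ hlog
      ha₀ (by positivity) hle hwin hγ₀ hγ₁ hRγ hs
  obtain ⟨ν, hpν, hν₁, hνθ⟩ := exists_lt_lt_one_rpow_lt hp0 (hδp.trans hδ1) hθ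
  obtain ⟨A, hA⟩ := exists_le_mul_pow_of_bootstrap hRnonneg hp0.le hθ (hp0.trans hδp) hδ1 hpν
    hν₁ hrec' hdecay ⟨R 0, hδrate⟩
  obtain ⟨s, hνs, hsp⟩ := exists_between hνθ
  obtain ⟨C, hC⟩ := hdecay ν A s (hp0.trans hpν) hν₁ hA hνs
  exact exists_le_tendsto_succ_div hp0 hR0
    (delayedTerm_nonneg hm₂ hRnonneg hq0 fun j k => (hm₁₀ j k).le)
    ((Real.rpow_nonneg (hp0.trans hpν).le _).trans hνs.le) hsp hrec' hC
end

section
/- Let p, δ ∈ (0,1), η > 1, q ≥ 0, and let (m₁^(k))_{k≥0}, (m₂^(k))_{k≥0} be sequences of nonnegative reals, with m₂^(k) an integer for each k. Define R̄ : ℕ → ℝ by a given R̄(0) > 0 and R̄(k+1) := p R̄(k) + q m₁^(k) max_{(k − m₂^(k))_+ ≤ ℓ ≤ k} R̄(ℓ)^{η}, where the max is over integers ℓ. Suppose R̄(k) ≤ δ^k R̄(0) for all k ≥ 0. Then R̄(k) > 0 for all k, and for every k ≥ 0: R̄(k+1)/R̄(k) ≤ p + q R̄(0)^{η−1} m₁^(k)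 p^{−m₂^(k)} δ^{(η−1)(k − m₂^(k))}. -/
/-!
Every term dominates `p` times its predecessor, so `R̄(ℓ) ≤ p^{-(k-ℓ)} R̄(k) ≤ p^{-m₂^(k)} R̄(k)`
on the delay window `ℓ ∈ [k - m₂^(k), k]`, while the geometric decay gives
`R̄(ℓ)^{η-1} ≤ R̄(0)^{η-1} δ^{(η-1)(k - m₂^(k))}` there. Splitting `R̄(ℓ)^η = R̄(ℓ)^{η-1} R̄(ℓ)`
bounds the window maximum by a multiple of `R̄(k)`, which is the ratio bound.
-/

open Finset

noncomputable def windowMax (R : ℕ → ℝ) (η : ℝ) (k m : ℕ) : ℝ :=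
  (Icc (k - m) k).sup' (nonempty_Icc.mpr (Nat.sub_le k m)) fun ℓ => R ℓ ^ η

lemma rpow_le_windowMax (R : ℕ → ℝ) (η : ℝ) {k m ℓ : ℕ} (h₁ : k - m ≤ ℓ) (h₂ : ℓ ≤ k) :
    R ℓ ^ η ≤ windowMax R η k m :=
  le_sup' (fun ℓ => R ℓ ^ η) (mem_Icc.mpr ⟨h₁, h₂⟩)

lemma pow_sub_mul_le_of_mul_le_succ {α : Type*} [Semiring α] [PartialOrder α] [IsOrderedRing α]
    {p : α} {u : ℕ → α} (hp : 0 ≤ p) (hstep : ∀ k, p * u k ≤ u (k + 1)) {ℓ k : ℕ}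
    (hℓk : ℓ ≤ k) : p ^ (k - ℓ) * u ℓ ≤ u k := by
  induction k, hℓk using Nat.le_induction with
  | base => simp
  | succ n hℓn ih =>
    calc p ^ (n + 1 - ℓ) * u ℓ = p * (p ^ (n - ℓ) * u ℓ) := by
          rw [Nat.sub_add_comm hℓn, pow_succ', mul_assoc]
      _ ≤ p * u n := mul_le_mul_of_nonneg_left ih hp
      _ ≤ u (n + 1) := hstep n

lemma inv_pow_le_rpow_neg {p : ℝ} (hp0 : 0 < p) (hp1 : p ≤ 1) {n m : ℕ} (h : n ≤ m) :
    (p ^ n)⁻¹ ≤ p ^ (-(m : ℝ)) := by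
  rw [Real.rpow_neg hp0.le, Real.rpow_natCast]
  exact inv_anti₀ (pow_pos hp0 m) (pow_le_pow_of_le_one hp0.le hp1 h)

lemma rpow_le_rpow_mul_rpow_of_le_pow_mul {x a δ t s : ℝ} {ℓ : ℕ} (hx : 0 ≤ x) (ha : 0 ≤ a)
    (hδ0 : 0 < δ) (hδ1 : δ ≤ 1) (ht : 0 ≤ t) (hs : s ≤ ℓ) (h : x ≤ δ ^ ℓ * a) :
    x ^ t ≤ a ^ t * δ ^ (t * s) := by
  calc x ^ t ≤ (δ ^ ℓ * a) ^ t := Real.rpow_le_rpow hx h ht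
    _ = δ ^ ((ℓ : ℝ) * t) * a ^ t := by
        rw [Real.mul_rpow (pow_nonneg hδ0.le ℓ) ha, ← Real.rpow_natCast, Real.rpow_mul hδ0.le]
    _ ≤ δ ^ (t * s) * a ^ t :=
        mul_le_mul_of_nonneg_right
          (Real.rpow_le_rpow_of_exponent_ge hδ0 hδ1 (by nlinarith)) (Real.rpow_nonneg ha t)
    _ = a ^ t * δ ^ (t * s) := mul_comm _ _

section DelayedRecursion

variable {p q η : ℝ} {m₁ : ℕ → ℝ} {m₂ : ℕ → ℕ} {R : ℕ → ℝ}

lemma mul_le_succ_of_nonneg (hq : 0 ≤ q) (hm₁ : ∀ k, 0 ≤ m₁ k)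
    (hrec : ∀ k, R (k + 1) = p * R k + q * m₁ k * windowMax R η k (m₂ k))
    {k : ℕ} (hk : 0 ≤ R k) : p * R k ≤ R (k + 1) := by
  have hW : 0 ≤ windowMax R η k (m₂ k) :=
    (Real.rpow_nonneg hk η).trans (rpow_le_windowMax R η (Nat.sub_le k _) le_rfl)
  rw [hrec k]
  exact le_add_of_nonneg_right (mul_nonneg (mul_nonneg hq (hm₁ k)) hW)

lemma pos_of_delayedRecursion (hp : 0 < p) (hq : 0 ≤ q) (hm₁ : ∀ k, 0 ≤ m₁ k)
    (hrec : ∀ k, R (k + 1) = p * R k + q * m₁ k * windowMax R η k (m₂ k)) (hR0 : 0 < R 0)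
    (k : ℕ) : 0 < R k := by
  induction k with
  | zero => exact hR0
  | succ k ih => exact (mul_pos hp ih).trans_le (mul_le_succ_of_nonneg hq hm₁ hrec ih.le)

lemma windowMax_le_of_geometric {δ : ℝ} (hp0 : 0 < p) (hp1 : p ≤ 1) (hδ0 : 0 < δ)
    (hδ1 : δ ≤ 1) (hη : 1 ≤ η) (hq : 0 ≤ q) (hm₁ : ∀ k, 0 ≤ m₁ k)
    (hrec : ∀ k, R (k + 1) = p * R k + q * m₁ k * windowMax R η k (m₂ k)) (hR0 : 0 < R 0)
    (hgeom : ∀ k, R k ≤ δ ^ k * R 0) (k : ℕ) :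
    windowMax R η k (m₂ k) ≤
      R 0 ^ (η - 1) * δ ^ ((η - 1) * ((k : ℝ) - m₂ k)) * (p ^ (-(m₂ k : ℝ)) * R k) := by
  have hpos := pos_of_delayedRecursion hp0 hq hm₁ hrec hR0
  have hstep : ∀ n, p * R n ≤ R (n + 1) := fun n => mul_le_succ_of_nonneg hq hm₁ hrec (hpos n).le
  refine sup'_le _ _ fun ℓ hℓ => ?_
  obtain ⟨hlo, hhi⟩ := mem_Icc.mp hℓ
  have hback : R ℓ ≤ p ^ (-(m₂ k : ℝ)) * R k :=
    calc R ℓ ≤ (p ^ (k - ℓ))⁻¹ * R k := by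
          rw [inv_mul_eq_div, le_div_iff₀' (pow_pos hp0 _)]
          exact pow_sub_mul_le_of_mul_le_succ hp0.le hstep hhi
      _ ≤ p ^ (-(m₂ k : ℝ)) * R k :=
          mul_le_mul_of_nonneg_right (inv_pow_le_rpow_neg hp0 hp1 (by omega)) (hpos k).le
  have hwindow : (k : ℝ) - m₂ k ≤ ℓ := by
    have : (k : ℝ) ≤ ℓ + m₂ k := by exact_mod_cast (by omega : k ≤ ℓ + m₂ k)
    linarith
  have hdecay : R ℓ ^ (η - 1) ≤ R 0 ^ (η - 1) * δ ^ ((η - 1) * ((k : ℝ) - m₂ k)) :=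
    rpow_le_rpow_mul_rpow_of_le_pow_mul (hpos ℓ).le hR0.le hδ0 hδ1 (by linarith) hwindow
      (hgeom ℓ)
  calc R ℓ ^ η = R ℓ ^ (η - 1) * R ℓ := by
        rw [← Real.rpow_add_one (hpos ℓ).ne', sub_add_cancel]
    _ ≤ _ := mul_le_mul hdecay hback (hpos ℓ).le (by positivity)

end DelayedRecursion

/-- ratio bound for the upper-bound sequence `R̄` in the proof of
part (ii) of the lemma on nonlinear delayed recursions. The powers with real
exponents (`p^{−m₂^(k)}`, `δ^{(η−1)(k−m₂^(k))}`, `R̄(ℓ)^η`, `R̄(0)^{η−1}`) are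
real powers (`Real.rpow`). -/
theorem upper_bound_sequence_ratio_bound
    (p δ η q : ℝ)
    (hp0 : 0 < p) (hp1 : p < 1) (hδ0 : 0 < δ) (hδ1 : δ < 1)
    (hη : 1 < η) (hq : 0 ≤ q)
    (m₁ : ℕ → ℝ) (hm₁ : ∀ k, 0 ≤ m₁ k)
    (m₂ : ℕ → ℕ)
    (Rbar : ℕ → ℝ) (hR0 : 0 < Rbar 0)
    (hrec : ∀ k : ℕ, Rbar (k + 1) = p * Rbar k + q * m₁ k *
      (Finset.Icc (k - m₂ k) k).sup'
        (Finset.nonempty_Icc.mpr (Nat.sub_le k (m₂ k)))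
        (fun ℓ => Rbar ℓ ^ η))
    (hgeom : ∀ k : ℕ, Rbar k ≤ δ ^ k * Rbar 0) :
    (∀ k, 0 < Rbar k) ∧
    ∀ k : ℕ, Rbar (k + 1) / Rbar k
      ≤ p + q * Rbar 0 ^ (η - 1) * m₁ k * p ^ (-(m₂ k : ℝ))
          * δ ^ ((η - 1) * ((k : ℝ) - (m₂ k : ℝ))) := by
  have hrec' : ∀ k, Rbar (k + 1) = p * Rbar k + q * m₁ k * windowMax Rbar η k (m₂ k) := hrec
  have hpos := pos_of_delayedRecursion hp0 hq hm₁ hrec' hR0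
  refine ⟨hpos, fun k => ?_⟩
  have hW := windowMax_le_of_geometric hp0 hp1.le hδ0 hδ1.le hη.le hq hm₁ hrec' hR0 hgeom k
  have hqm : 0 ≤ q * m₁ k := mul_nonneg hq (hm₁ k)
  rw [div_le_iff₀ (hpos k), hrec' k]
  calc p * Rbar k + q * m₁ k * windowMax Rbar η k (m₂ k)
      ≤ p * Rbar k + q * m₁ k * (Rbar 0 ^ (η - 1) * δ ^ ((η - 1) * ((k : ℝ) - m₂ k))
          * (p ^ (-(m₂ k : ℝ)) * Rbar k)) := by gcongr
    _ = _ := by ring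
end
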